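/- arXiv:2207.07995 — 10 statements merged into one kernel-verified Lean document; each statement's English description precedes it below -/
import Mathlib

section
/- In a residuated lattice, for any filter F and elements x, y, the filter generated by F together with x, intersected with the filter generated by F together with y, equals the filter generated by F together with x ∨ y. -/
structure ResiduatedLattice (A : Type*) [Lattice A] [BoundedOrder A] where
  mul : A → A → A
  himp : A → A → A
  mul_comm : ∀ x y : A, mul x y = mul y x
  mul_assoc : ∀ x y z : A, mul (mul x y) z = mul x (mul y z)
  mul_top : ∀ x : A, mul x ⊤ = x
  adj : ∀ x y z : A, mul x z ≤ y ↔ z ≤ himp x y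

namespace ResiduatedLattice

variable {A : Type*} [Lattice A] [BoundedOrder A]

/-- ¬a := a → 0 -/
def neg (R : ResiduatedLattice A) (a : A) : A := R.himp a ⊥

/-- A filter: nonempty, closed under ⊙, and closed under joining with arbitrary elements. -/
def IsFilter (R : ResiduatedLattice A) (F : Set A) : Prop :=
  F.Nonempty ∧ (∀ x ∈ F, ∀ y ∈ F, R.mul x y ∈ F) ∧ (∀ x ∈ F, ∀ y : A, x ⊔ y ∈ F)

/-- Join of two filters: the filter generated by their union. -/
def FJoin (R : ResiduatedLattice A) (F G : Set A) : Set A :=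
  {c | ∃ f ∈ F, ∃ g ∈ G, R.mul f g ≤ c}

/-- Coannulet a⊥ = {x | x ∨ a = 1}. -/
def perp (R : ResiduatedLattice A) (a : A) : Set A := {x | x ⊔ a = ⊤}

/-- Powers aⁿ with a⁰ = 1 = ⊤. -/
def pow (R : ResiduatedLattice A) (a : A) : ℕ → A
  | 0 => ⊤
  | n + 1 => R.mul a (pow R a n)

/-- Filter generated by a filter F together with an element x. -/
def FGen (R : ResiduatedLattice A) (F : Set A) (x : A) : Set A :=
  {a | ∃ f ∈ F, ∃ n : ℕ, R.mul f (R.pow x n) ≤ a}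

/-- Principal filter generated by a. -/
def principal (R : ResiduatedLattice A) (a : A) : Set A :=
  {b | ∃ n : ℕ, R.pow a n ≤ b}

/-- The sink σ(F) = {a | a⊥ ⋎ F = A}. -/
def sink (R : ResiduatedLattice A) (F : Set A) : Set A :=
  {a | R.FJoin (R.perp a) F = Set.univ}

/-- Purity condition: a⊥ ⋎ F = A for every a ∈ F. -/
def PureOn (R : ResiduatedLattice A) (F : Set A) : Prop :=
  ∀ a ∈ F, R.FJoin (R.perp a) F = Set.univ

/-- Prime filter. -/
def IsPrime (R : ResiduatedLattice A) (F : Set A) : Prop :=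
  R.IsFilter F ∧ F ≠ Set.univ ∧ ∀ x y : A, x ⊔ y ∈ F → x ∈ F ∨ y ∈ F

/-- Minimal prime filter. -/
def IsMinimalPrime (R : ResiduatedLattice A) (F : Set A) : Prop :=
  R.IsPrime F ∧ ∀ G : Set A, R.IsPrime G → G ⊆ F → G = F

/-- Filter generated by an arbitrary set X. -/
def gen (R : ResiduatedLattice A) (X : Set A) : Set A :=
  {a | ∃ l : List A, (∀ x ∈ l, x ∈ X) ∧ l.foldr R.mul ⊤ ≤ a}

/-- Purely-prime filter: proper pure filter p such that F₁ ∩ F₂ = p for pure filters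
implies F₁ = p or F₂ = p. -/
def PurelyPrime (R : ResiduatedLattice A) (p : Set A) : Prop :=
  R.IsFilter p ∧ R.PureOn p ∧ p ≠ Set.univ ∧
    ∀ F₁ F₂ : Set A, R.IsFilter F₁ → R.PureOn F₁ → R.IsFilter F₂ → R.PureOn F₂ →
      F₁ ∩ F₂ = p → F₁ = p ∨ F₂ = p

/-- (H : a) = {x | x ∨ a ∈ H}. -/
def res (R : ResiduatedLattice A) (H : Set A) (a : A) : Set A :=
  {x | x ⊔ a ∈ H}

end ResiduatedLattice

open ResiduatedLattice

variable {A : Type*} [Lattice A] [BoundedOrder A]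


namespace ResiduatedLattice

variable {A : Type*} [Lattice A] [BoundedOrder A]

lemma mul_mono_right (R : ResiduatedLattice A) {b c : A} (a : A) (h : b ≤ c) :
    R.mul a b ≤ R.mul a c := by
  have h1 : c ≤ R.himp a (R.mul a c) := (R.adj a (R.mul a c) c).mp le_rfl
  exact (R.adj a (R.mul a c) b).mpr (h.trans h1)

lemma mul_mono_left (R : ResiduatedLattice A) {b c : A} (a : A) (h : b ≤ c) :
    R.mul b a ≤ R.mul c a := by
  rw [R.mul_comm b a, R.mul_comm c a]; exact R.mul_mono_right a h

lemma mul_le_left (R : ResiduatedLattice A) (a b : A) : R.mul a b ≤ a := by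
  have := R.mul_mono_right a (le_top (a := b))
  rwa [R.mul_top] at this

lemma mul_le_right (R : ResiduatedLattice A) (a b : A) : R.mul a b ≤ b := by
  rw [R.mul_comm]; exact R.mul_le_left b a

lemma mul_sup (R : ResiduatedLattice A) (a b c : A) :
    R.mul a (b ⊔ c) = R.mul a b ⊔ R.mul a c := by
  apply le_antisymm
  · apply (R.adj a _ _).mpr
    apply sup_le
    · exact (R.adj a _ _).mp le_sup_left
    · exact (R.adj a _ _).mp le_sup_right
  · exact sup_le (R.mul_mono_right a le_sup_left) (R.mul_mono_right a le_sup_right)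

lemma sup_mul (R : ResiduatedLattice A) (a b c : A) :
    R.mul (a ⊔ b) c = R.mul a c ⊔ R.mul b c := by
  rw [R.mul_comm, R.mul_sup, R.mul_comm c a, R.mul_comm c b]

lemma pow_le_pow (R : ResiduatedLattice A) (a : A) {m n : ℕ} (h : m ≤ n) :
    R.pow a n ≤ R.pow a m := by
  induction n with
  | zero => simp_all [pow]
  | succ k ih =>
    rcases Nat.lt_or_ge m (k+1) with h' | h'
    · exact (R.mul_le_right a _).trans (ih (Nat.lt_succ_iff.mp h'))
    · have : m = k + 1 := le_antisymm h h'
      subst this; exact le_rfl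

lemma pow_mono_base (R : ResiduatedLattice A) {a b : A} (h : a ≤ b) (n : ℕ) :
    R.pow a n ≤ R.pow b n := by
  induction n with
  | zero => exact le_rfl
  | succ k ih =>
    exact le_trans (R.mul_mono_left _ h) (R.mul_mono_right _ ih)

lemma pow_sup_le (R : ResiduatedLattice A) (a b : A) :
    ∀ m n : ℕ, R.pow (a ⊔ b) (m + n) ≤ R.pow a m ⊔ R.pow b n := by
  intro m
  induction m with
  | zero => intro n; simp [pow]
  | succ m ihm =>
    intro n
    induction n with
    | zero => simp [pow]
    | succ n ihn =>
      have key : R.pow (a ⊔ b) (m + 1 + (n + 1))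
          = R.mul a (R.pow (a ⊔ b) (m + (n + 1))) ⊔ R.mul b (R.pow (a ⊔ b) (m + 1 + n)) := by
        have e1 : m + 1 + (n + 1) = (m + (n + 1)) + 1 := by omega
        have e2 : m + (n + 1) = m + 1 + n := by omega
        rw [e1]
        show R.mul (a ⊔ b) _ = _
        rw [R.sup_mul]
        congr 1
        rw [e2]
      rw [key]
      apply sup_le
      · calc R.mul a (R.pow (a ⊔ b) (m + (n + 1)))
            ≤ R.mul a (R.pow a m ⊔ R.pow b (n + 1)) := R.mul_mono_right a (ihm (n+1))
          _ = R.mul a (R.pow a m) ⊔ R.mul a (R.pow b (n + 1)) := R.mul_sup a _ _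
          _ ≤ R.pow a (m + 1) ⊔ R.pow b (n + 1) :=
              sup_le le_sup_left ((R.mul_le_right a _).trans le_sup_right)
      · calc R.mul b (R.pow (a ⊔ b) (m + 1 + n))
            ≤ R.mul b (R.pow a (m + 1) ⊔ R.pow b n) := R.mul_mono_right b ihn
          _ = R.mul b (R.pow a (m + 1)) ⊔ R.mul b (R.pow b n) := R.mul_sup b _ _
          _ ≤ R.pow a (m + 1) ⊔ R.pow b (n + 1) :=
              sup_le ((R.mul_le_right b _).trans le_sup_left) le_sup_right

end ResiduatedLattice

theorem stmt0 (R : ResiduatedLattice A) (F : Set A) (hF : R.IsFilter F) (x y : A) :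
    R.FGen F x ∩ R.FGen F y = R.FGen F (x ⊔ y) := by
  ext a
  constructor
  · rintro ⟨⟨f, hf, m, hfm⟩, ⟨g, hg, n, hgn⟩⟩
    refine ⟨R.mul f g, hF.2.1 f hf g hg, m + n, ?_⟩
    calc R.mul (R.mul f g) (R.pow (x ⊔ y) (m + n))
        ≤ R.mul (R.mul f g) (R.pow x m ⊔ R.pow y n) :=
          R.mul_mono_right _ (R.pow_sup_le x y m n)
      _ = R.mul (R.mul f g) (R.pow x m) ⊔ R.mul (R.mul f g) (R.pow y n) := R.mul_sup _ _ _
      _ ≤ a := by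
          apply sup_le
          · calc R.mul (R.mul f g) (R.pow x m)
                ≤ R.mul f (R.pow x m) := R.mul_mono_left _ (R.mul_le_left f g)
              _ ≤ a := hfm
          · calc R.mul (R.mul f g) (R.pow y n)
                ≤ R.mul g (R.pow y n) := R.mul_mono_left _ (R.mul_le_right f g)
              _ ≤ a := hgn
  · rintro ⟨f, hf, n, hfn⟩
    constructor
    · exact ⟨f, hf, n, le_trans (R.mul_mono_right f (R.pow_mono_base le_sup_left n)) hfn⟩
    · exact ⟨f, hf, n, le_trans (R.mul_mono_right f (R.pow_mono_base le_sup_right n)) hfn⟩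
end

section
/- In a residuated lattice, if e is a complemented element of the underlying bounded lattice, then e ⊙ x = e ∧ x for every element x. -/
open ResiduatedLattice

variable {A : Type*} [Lattice A] [BoundedOrder A]

private lemma Rmul_le_right (R : ResiduatedLattice A) {a b : A} (c : A) (h : a ≤ b) :
    R.mul a c ≤ R.mul b c := by
  rw [R.mul_comm a c, R.adj]
  exact le_trans h ((R.adj c (R.mul b c) b).mp (by rw [R.mul_comm]))

private lemma Rmul_le_left (R : ResiduatedLattice A) {a b : A} (c : A) (h : a ≤ b) :
    R.mul c a ≤ R.mul c b := by
  rw [R.mul_comm c a, R.mul_comm c b]; exact Rmul_le_right R c h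

private lemma Rmul_sup (R : ResiduatedLattice A) (a b c : A) :
    R.mul a (b ⊔ c) = R.mul a b ⊔ R.mul a c := by
  apply le_antisymm
  · rw [R.adj]
    exact sup_le ((R.adj a _ b).mp le_sup_left) ((R.adj a _ c).mp le_sup_right)
  · exact sup_le (Rmul_le_left R a le_sup_left) (Rmul_le_left R a le_sup_right)

theorem stmt3 (R : ResiduatedLattice A) (e : A)
    (he : ∃ f : A, e ⊔ f = ⊤ ∧ e ⊓ f = ⊥) :
    ∀ x : A, R.mul e x = e ⊓ x := by
  obtain ⟨f, hsup, hinf⟩ := he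
  intro x
  apply le_antisymm
  · exact le_inf
      (by calc R.mul e x ≤ R.mul e ⊤ := Rmul_le_left R e le_top
            _ = e := R.mul_top e)
      (by calc R.mul e x = R.mul x e := R.mul_comm e x
            _ ≤ R.mul x ⊤ := Rmul_le_left R x le_top
            _ = x := R.mul_top x)
  · have h1 : e ⊓ x = R.mul (e ⊓ x) (e ⊔ f) := by rw [hsup, R.mul_top]
    have h2 : R.mul (e ⊓ x) f ≤ ⊥ := by
      rw [← hinf]
      exact le_inf
        (le_trans (Rmul_le_right R f inf_le_left)
          (le_trans (Rmul_le_left R e le_top) (le_of_eq (R.mul_top e))))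
        (by rw [R.mul_comm]; exact le_trans (Rmul_le_left R f le_top) (le_of_eq (R.mul_top f)))
    have h3 : R.mul (e ⊓ x) e ≤ R.mul e x := by
      rw [R.mul_comm e x]; exact Rmul_le_right R e inf_le_right
    calc e ⊓ x = R.mul (e ⊓ x) (e ⊔ f) := h1
      _ = R.mul (e ⊓ x) e ⊔ R.mul (e ⊓ x) f := Rmul_sup R _ _ _
      _ ≤ R.mul e x ⊔ ⊥ := sup_le_sup h3 h2
      _ = R.mul e x := sup_bot_eq _
end

section
/- Let A be a residuated lattice and F a filter of A. Then σ(F) = {a ∈ A | ¬b ∈ F for some b ∈ a⊥}, where σ(F) = {a ∈ A | a⊥ ⋎ F = A}, a⊥ = {x | x ∨ a = 1}, and ¬b = b → 0. -/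
open ResiduatedLattice

variable {A : Type*} [Lattice A] [BoundedOrder A]

theorem stmt6 (R : ResiduatedLattice A) (F : Set A) (hF : R.IsFilter F) :
    R.sink F = {a : A | ∃ b ∈ R.perp a, R.neg b ∈ F} := by
  obtain ⟨hne, hmul, hjoin⟩ := hF
  ext a
  constructor
  · intro ha
    have h0 : (⊥ : A) ∈ R.FJoin (R.perp a) F := by rw [ha]; trivial
    obtain ⟨b, hb, f, hf, hle⟩ := h0
    refine ⟨b, hb, ?_⟩
    have hf' : f ≤ R.neg b := (R.adj b ⊥ f).mp hle
    have : f ⊔ R.neg b ∈ F := hjoin f hf _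
    rwa [sup_eq_right.mpr hf'] at this
  · rintro ⟨b, hb, hnb⟩
    apply Set.eq_univ_of_forall
    intro c
    refine ⟨b, hb, R.neg b, hnb, ?_⟩
    calc R.mul b (R.neg b) ≤ ⊥ := (R.adj b ⊥ (R.neg b)).mpr le_rfl
    _ ≤ c := bot_le
end

section
/- Let A be a residuated lattice. A filter F is pure (i.e., σ(F) = F where σ(F) = {a | a⊥ ⋎ F = A}) if and only if the set d(F) = {𝔭 prime filter | F ⊄ 𝔭} is stable under specialization: whenever 𝔭 ∈ d(F), 𝔭 and 𝔮 are prime filters, and 𝔭 ⊆ 𝔮, then 𝔮 ∈ d(F). -/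
open ResiduatedLattice

variable {A : Type*} [Lattice A] [BoundedOrder A]

namespace ResidProof

open ResiduatedLattice

variable {A : Type*} [Lattice A] [BoundedOrder A] (R : ResiduatedLattice A)

theorem mulc {x y : A} (z : A) (h : x ≤ y) : R.mul z x ≤ R.mul z y := by
  rw [R.adj]; exact h.trans ((R.adj z (R.mul z y) y).mp le_rfl)

theorem mul_mono {x x' y y' : A} (hx : x ≤ x') (hy : y ≤ y') :
    R.mul x y ≤ R.mul x' y' := by
  refine (mulc R x hy).trans ?_
  rw [R.mul_comm x y', R.mul_comm x' y']
  exact mulc R y' hx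

theorem mul_le_left (x y : A) : R.mul x y ≤ x := by
  have h := mulc R x (le_top (a := y))
  rwa [R.mul_top] at h

theorem mul_le_right (x y : A) : R.mul x y ≤ y := by
  rw [R.mul_comm]; exact mul_le_left R y x

theorem top_mul (x : A) : R.mul ⊤ x = x := by rw [R.mul_comm, R.mul_top]

theorem mul_sup (x y z : A) : R.mul x (y ⊔ z) = R.mul x y ⊔ R.mul x z := by
  apply le_antisymm
  · rw [R.adj]
    exact sup_le ((R.adj x _ y).mp le_sup_left) ((R.adj x _ z).mp le_sup_right)
  · exact sup_le (mulc R x le_sup_left) (mulc R x le_sup_right)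

theorem sup_mul (x y z : A) : R.mul (y ⊔ z) x = R.mul y x ⊔ R.mul z x := by
  rw [R.mul_comm, mul_sup, R.mul_comm x y, R.mul_comm x z]

theorem mul_mul_mul_comm (a b c d : A) :
    R.mul (R.mul a b) (R.mul c d) = R.mul (R.mul a c) (R.mul b d) := by
  rw [R.mul_assoc, ← R.mul_assoc b c d, R.mul_comm b c, R.mul_assoc c b d,
    ← R.mul_assoc a c (R.mul b d)]

theorem mem_of_le {F : Set A} (hF : R.IsFilter F) {x y : A} (hx : x ∈ F) (h : x ≤ y) :
    y ∈ F := by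
  have h2 := hF.2.2 x hx y
  rwa [sup_eq_right.mpr h] at h2

theorem top_mem {F : Set A} (hF : R.IsFilter F) : (⊤ : A) ∈ F := by
  obtain ⟨x, hx⟩ := hF.1
  exact mem_of_le R hF hx le_top

theorem pow_succ (x : A) (n : ℕ) : R.pow x (n + 1) = R.mul x (R.pow x n) := rfl

theorem pow_zero (x : A) : R.pow x 0 = ⊤ := rfl

theorem pow_mem {F : Set A} (hF : R.IsFilter F) {x : A} (hx : x ∈ F) (n : ℕ) :
    R.pow x n ∈ F := by
  induction n with
  | zero => exact top_mem R hF
  | succ n ih => exact hF.2.1 x hx _ ih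

theorem pow_sup_le (x y : A) : ∀ k n m : ℕ, n + m = k →
    R.pow (x ⊔ y) k ≤ R.pow x n ⊔ R.pow y m := by
  intro k
  induction k with
  | zero =>
    intro n m h
    obtain ⟨rfl, rfl⟩ : n = 0 ∧ m = 0 := by omega
    exact le_sup_left
  | succ k ih =>
    intro n m h
    cases n with
    | zero => exact le_trans le_top le_sup_left
    | succ n' =>
      rw [pow_succ, R.mul_comm, mul_sup]
      apply sup_le
      · have h1 : R.mul (R.pow (x ⊔ y) k) x ≤ R.mul (R.pow x n' ⊔ R.pow y m) x :=
          mul_mono R (ih n' m (by omega)) le_rfl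
        refine h1.trans ?_
        rw [sup_mul]
        refine sup_le ?_ ?_
        · rw [R.mul_comm]; exact le_sup_left
        · exact le_trans (mul_le_left R _ _) le_sup_right
      · cases m with
        | zero => exact le_trans le_top le_sup_right
        | succ m' =>
          have h1 : R.mul (R.pow (x ⊔ y) k) y ≤ R.mul (R.pow x (n' + 1) ⊔ R.pow y m') y :=
            mul_mono R (ih (n' + 1) m' (by omega)) le_rfl
          refine h1.trans ?_
          rw [sup_mul]
          refine sup_le (le_trans (mul_le_left R _ _) le_sup_left) ?_
          rw [R.mul_comm]
          exact le_sup_right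

theorem pow_add (x : A) (n m : ℕ) :
    R.pow x (n + m) = R.mul (R.pow x n) (R.pow x m) := by
  induction n with
  | zero => rw [Nat.zero_add, pow_zero, top_mul]
  | succ n ih =>
    have h : n + 1 + m = (n + m) + 1 := by omega
    rw [h, pow_succ, ih, pow_succ, R.mul_assoc]

theorem FGen_isFilter {F : Set A} (hF : R.IsFilter F) (x : A) :
    R.IsFilter (R.FGen F x) := by
  obtain ⟨f0, hf0⟩ := hF.1
  refine ⟨⟨f0, f0, hf0, 0, le_of_eq (R.mul_top f0)⟩, ?_, ?_⟩
  · rintro c ⟨f, hf, n, hn⟩ c' ⟨g, hg, m, hm⟩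
    refine ⟨R.mul f g, hF.2.1 f hf g hg, n + m, ?_⟩
    rw [pow_add, mul_mul_mul_comm]
    exact mul_mono R hn hm
  · rintro c ⟨f, hf, n, hn⟩ y
    exact ⟨f, hf, n, hn.trans le_sup_left⟩

theorem subset_FGen {F : Set A} (x : A) : F ⊆ R.FGen F x :=
  fun f hf => ⟨f, hf, 0, le_of_eq (R.mul_top f)⟩

theorem mem_FGen {F : Set A} (hF : R.IsFilter F) (x : A) : x ∈ R.FGen F x := by
  obtain ⟨f0, hf0⟩ := hF.1
  refine ⟨f0, hf0, 1, ?_⟩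
  have : R.pow x 1 = x := by rw [pow_succ, pow_zero, R.mul_top]
  rw [this]
  exact mul_le_right R f0 x

theorem primeExt (D : Set A) (hdown : ∀ x y : A, x ≤ y → y ∈ D → x ∈ D)
    (hsup : ∀ x ∈ D, ∀ y ∈ D, x ⊔ y ∈ D) (hbot : (⊥ : A) ∈ D)
    {G : Set A} (hG : R.IsFilter G) (hGD : ∀ x ∈ G, x ∉ D) :
    ∃ p : Set A, R.IsPrime p ∧ G ⊆ p ∧ ∀ x ∈ p, x ∉ D := by
  set S : Set (Set A) := {p | R.IsFilter p ∧ G ⊆ p ∧ ∀ x ∈ p, x ∉ D} with hS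
  have hub : ∀ c ⊆ S, IsChain (· ⊆ ·) c → c.Nonempty → ∃ ub ∈ S, ∀ s ∈ c, s ⊆ ub := by
    intro c hcS hchain hcne
    obtain ⟨t, htc⟩ := hcne
    refine ⟨⋃₀ c, ⟨⟨?_, ?_, ?_⟩, ?_, ?_⟩, fun s hs => Set.subset_sUnion_of_mem hs⟩
    · obtain ⟨z, hz⟩ := (hcS htc).1.1
      exact ⟨z, t, htc, hz⟩
    · rintro u ⟨t1, ht1, hu⟩ v ⟨t2, ht2, hv⟩
      rcases hchain.total ht1 ht2 with h | h
      · exact ⟨t2, ht2, (hcS ht2).1.2.1 u (h hu) v hv⟩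
      · exact ⟨t1, ht1, (hcS ht1).1.2.1 u hu v (h hv)⟩
    · rintro u ⟨t1, ht1, hu⟩ y
      exact ⟨t1, ht1, (hcS ht1).1.2.2 u hu y⟩
    · exact (hcS htc).2.1.trans (Set.subset_sUnion_of_mem htc)
    · rintro z ⟨t1, ht1, hz⟩ hzD
      exact (hcS ht1).2.2 z hz hzD
  obtain ⟨m, hGm, hmax⟩ := zorn_subset_nonempty S hub G ⟨hG, subset_rfl, hGD⟩
  · have hmS : m ∈ S := hmax.1
    refine ⟨m, ⟨hmS.1, ?_, ?_⟩, hmS.2.1, hmS.2.2⟩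
    · intro h
      exact hmS.2.2 ⊥ (h ▸ Set.mem_univ ⊥) hbot
    · intro x y hxy
      by_contra hc
      push_neg at hc
      obtain ⟨hx, hy⟩ := hc
      have key : ∀ z : A, z ∉ m → ∃ f ∈ m, ∃ n : ℕ, R.mul f (R.pow z n) ∈ D := by
        intro z hz
        by_contra hno
        push_neg at hno
        have hFg : R.FGen m z ∈ S := by
          refine ⟨FGen_isFilter R hmS.1 z, hmS.2.1.trans (subset_FGen R z), ?_⟩
          rintro c ⟨f, hf, n, hn⟩ hcD
          exact hno f hf n (hdown _ c hn hcD)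
        have hsub := hmax.2 hFg (subset_FGen R z)
        exact hz (hsub (mem_FGen R hmS.1 z))
      obtain ⟨f, hf, n, hfn⟩ := key x hx
      obtain ⟨g, hg, k, hgk⟩ := key y hy
      have ht : R.mul (R.mul f g) (R.pow (x ⊔ y) (n + k)) ∈ m :=
        hmS.1.2.1 _ (hmS.1.2.1 f hf g hg) _ (pow_mem R hmS.1 hxy (n + k))
      have hle : R.mul (R.mul f g) (R.pow (x ⊔ y) (n + k)) ≤
          R.mul f (R.pow x n) ⊔ R.mul g (R.pow y k) := by
        refine le_trans (mulc R _ (pow_sup_le R x y (n + k) n k rfl)) ?_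
        rw [mul_sup]
        exact sup_le ((mul_mono R (mul_le_left R f g) le_rfl).trans le_sup_left)
          ((mul_mono R (mul_le_right R f g) le_rfl).trans le_sup_right)
      have hD2 : R.mul f (R.pow x n) ⊔ R.mul g (R.pow y k) ∈ D := hsup _ hfn _ hgk
      exact hmS.2.2 _ ht (hdown _ _ hle hD2)

end ResidProof

theorem stmt8 (R : ResiduatedLattice A) (F : Set A) (hF : R.IsFilter F) :
    R.sink F = F ↔
      ∀ p q : Set A, R.IsPrime p → R.IsPrime q → p ⊆ q → ¬ F ⊆ p → ¬ F ⊆ q := by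
  classical
  obtain ⟨f0, hf0⟩ := hF.1
  have htop_perp : ∀ a : A, (⊤ : A) ∈ R.perp a := by
    intro a; show (⊤ : A) ⊔ a = ⊤; exact top_sup_eq a
  have hperpJ : ∀ a : A, R.perp a ⊆ R.FJoin (R.perp a) F := by
    intro a b hb
    exact ⟨b, hb, f0, hf0, ResidProof.mul_le_left R b f0⟩
  have hFJ : ∀ a : A, F ⊆ R.FJoin (R.perp a) F := by
    intro a f hf
    exact ⟨⊤, htop_perp a, f, hf, le_of_eq (ResidProof.top_mul R f)⟩
  have hsink_sub : R.sink F ⊆ F := by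
    intro a ha
    have ha' : R.FJoin (R.perp a) F = Set.univ := ha
    have h0 : (⊥ : A) ∈ R.FJoin (R.perp a) F := by rw [ha']; exact Set.mem_univ ⊥
    obtain ⟨b, hb, f, hf, hbf⟩ := h0
    have hb' : b ⊔ a = ⊤ := hb
    have hfa : f ≤ a := by
      have h1 : R.mul f (b ⊔ a) = f := by rw [hb', R.mul_top]
      have h2 : R.mul f (b ⊔ a) ≤ a := by
        rw [ResidProof.mul_sup]
        refine sup_le ?_ (ResidProof.mul_le_right R f a)
        have h3 : R.mul f b ≤ ⊥ := by rw [R.mul_comm]; exact hbf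
        exact h3.trans bot_le
      rwa [h1] at h2
    exact ResidProof.mem_of_le R hF hf hfa
  constructor
  · intro hpure p q hp hq hpq hFp hFq
    obtain ⟨a, haF, hap⟩ := Set.not_subset.mp hFp
    have ha' : R.FJoin (R.perp a) F = Set.univ := by
      have : a ∈ R.sink F := by rw [hpure]; exact haF
      exact this
    have h0 : (⊥ : A) ∈ R.FJoin (R.perp a) F := by rw [ha']; exact Set.mem_univ ⊥
    obtain ⟨b, hb, f, hf, hbf⟩ := h0
    have hb' : b ⊔ a = ⊤ := hb
    have hbap : b ⊔ a ∈ p := by rw [hb']; exact ResidProof.top_mem R hp.1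
    rcases hp.2.2 b a hbap with hbp | hap'
    · have hq1 : R.mul b f ∈ q := hq.1.2.1 b (hpq hbp) f (hFq hf)
      have hbotq : (⊥ : A) ∈ q := by
        have heq : R.mul b f = ⊥ := le_antisymm hbf bot_le
        rwa [heq] at hq1
      exact hq.2.1 (Set.eq_univ_of_forall fun y => ResidProof.mem_of_le R hq.1 hbotq bot_le)
    · exact hap hap'
  · intro hstab
    refine Set.Subset.antisymm hsink_sub ?_
    intro a haF
    show R.FJoin (R.perp a) F = Set.univ
    by_contra hne
    have hbotJ : (⊥ : A) ∉ R.FJoin (R.perp a) F := by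
      rintro ⟨b, hb, f, hf, hbf⟩
      apply hne
      apply Set.eq_univ_of_forall
      intro c
      exact ⟨b, hb, f, hf, hbf.trans bot_le⟩
    have hJfilter : R.IsFilter (R.FJoin (R.perp a) F) := by
      refine ⟨⟨f0, hFJ a hf0⟩, ?_, ?_⟩
      · rintro c ⟨b, hb, f, hf, hbf⟩ c' ⟨b', hb', f', hf', hbf'⟩
        refine ⟨R.mul b b', ?_, R.mul f f', hF.2.1 f hf f' hf', ?_⟩
        · show R.mul b b' ⊔ a = ⊤
          have hb1 : b ⊔ a = ⊤ := hb
          have hb2 : b' ⊔ a = ⊤ := hb'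
          apply le_antisymm le_top
          have heq : (⊤ : A) = R.mul (b ⊔ a) (b' ⊔ a) := by
            rw [hb1, hb2, R.mul_top]
          rw [heq, ResidProof.mul_sup, ResidProof.sup_mul, ResidProof.sup_mul]
          refine sup_le (sup_le ?_ ?_) (sup_le ?_ ?_)
          · exact le_sup_left
          · exact (ResidProof.mul_le_left R a b').trans le_sup_right
          · exact (ResidProof.mul_le_right R b a).trans le_sup_right
          · exact (ResidProof.mul_le_left R a a).trans le_sup_right
        · rw [ResidProof.mul_mul_mul_comm R b b' f f']
          exact ResidProof.mul_mono R hbf hbf'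
      · rintro c ⟨b, hb, f, hf, hbf⟩ y
        exact ⟨b, hb, f, hf, hbf.trans le_sup_left⟩
    obtain ⟨q, hq, hJq, hqD⟩ := ResidProof.primeExt R {x : A | x ≤ ⊥}
      (fun x y hxy hy => hxy.trans hy) (fun x hx y hy => sup_le hx hy) le_rfl
      hJfilter
      (by
        intro x hx hxb
        apply hbotJ
        have hxeq : x = ⊥ := le_antisymm hxb bot_le
        rwa [hxeq] at hx)
    have hbotq : (⊥ : A) ∉ q := fun h => hqD ⊥ h le_rfl
    set D2 : Set A := {x | ∃ d, d ∉ q ∧ x ≤ a ⊔ d} with hD2def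
    have hG0 : R.IsFilter {(⊤ : A)} := by
      refine ⟨⟨⊤, rfl⟩, ?_, ?_⟩
      · rintro x rfl y rfl
        show R.mul ⊤ ⊤ ∈ ({⊤} : Set A)
        rw [R.mul_top]
        rfl
      · rintro x rfl y
        show (⊤ : A) ⊔ y ∈ ({⊤} : Set A)
        rw [top_sup_eq]
        rfl
    obtain ⟨p, hp, _, hpD2⟩ := ResidProof.primeExt R D2
      (by
        rintro x y hxy ⟨d, hd, hyd⟩
        exact ⟨d, hd, hxy.trans hyd⟩)
      (by
        rintro x ⟨d, hd, hx⟩ y ⟨e, he, hy⟩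
        refine ⟨d ⊔ e, fun hmem => (hq.2.2 d e hmem).elim hd he, ?_⟩
        exact sup_le (hx.trans (sup_le_sup_left le_sup_left a))
          (hy.trans (sup_le_sup_left le_sup_right a)))
      ⟨⊥, hbotq, bot_le⟩
      hG0
      (by
        rintro x rfl ⟨d, hd, hxd⟩
        apply hd
        apply hJq
        apply hperpJ
        show d ⊔ a = ⊤
        rw [sup_comm]
        exact le_antisymm le_top hxd)
    have hpsubq : p ⊆ q := by
      intro x hxp
      by_contra hxq
      exact hpD2 x hxp ⟨x, hxq, le_sup_right⟩
    have hap : a ∉ p := fun hap => hpD2 a hap ⟨⊥, hbotq, le_sup_left⟩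
    have hFq : F ⊆ q := fun f hf => hJq (hFJ a hf)
    exact hstab p q hp hq hpsubq (Set.not_subset.mpr ⟨a, haF, hap⟩) hFq
end

section
/- In a residuated lattice, every principal filter generated by a complemented element is pure: if e ∨ ¬e = 1, then the filter 𝔉(e) = {a | e ≤ a} satisfies a⊥ ⋎ 𝔉(e) = A for every a ∈ 𝔉(e). -/
open ResiduatedLattice

variable {A : Type*} [Lattice A] [BoundedOrder A]

theorem stmt9 (R : ResiduatedLattice A) (e : A) (he : e ⊔ R.neg e = ⊤) :
    ∀ a : A, e ≤ a → R.FJoin (R.perp a) {b : A | e ≤ b} = Set.univ := by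
  intro a ha
  ext c
  simp only [Set.mem_univ, iff_true, FJoin, Set.mem_setOf_eq]
  refine ⟨R.neg e, ?_, e, le_refl e, ?_⟩
  · show R.neg e ⊔ a = ⊤
    rw [eq_top_iff, ← he]
    exact sup_le (ha.trans le_sup_right) le_sup_left
  · have h : R.mul e (R.neg e) ≤ ⊥ := (R.adj e ⊥ (R.neg e)).mpr le_rfl
    rw [R.mul_comm] at h
    exact h.trans bot_le
end

section
/- In a residuated lattice, the join ⋎ of any family of pure filters is pure, and the intersection of two pure filters is pure; hence the pure filters form a frame (complete lattice satisfying the join-infinite distributive law) under ∩ and ⋎. -/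
open ResiduatedLattice

variable {A : Type*} [Lattice A] [BoundedOrder A]

/-!
The sink `σ(H) = {a | a⊥ ⋎ H = A}` of a filter `H` is again a filter and is monotone in `H`,
and a filter `F` is pure exactly when `F ⊆ σ(F)`. If every member of a family is pure, each
member lies in the sink of its join, so the whole join does. For `F ∩ G`, an element `a` of it
splits every `c` as `u ⊙ f ≤ c` and `v ⊙ g ≤ c` with `u, v ∈ a⊥`, `f ∈ F`, `g ∈ G`; then
`(u ⊙ v) ⊙ (f ∨ g) ≤ c` with `u ⊙ v ∈ a⊥` and `f ∨ g ∈ F ∩ G`. Distributivity comes from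
the inequality `(a ∨ x) ⊙ (a ∨ y) ≤ a ∨ (x ⊙ y)`.
-/

namespace ResiduatedLattice

variable (R : ResiduatedLattice A)

lemma mul_le_mul_left' {y z : A} (x : A) (h : y ≤ z) : R.mul x y ≤ R.mul x z :=
  (R.adj x (R.mul x z) y).mpr (h.trans ((R.adj x (R.mul x z) z).mp le_rfl))

lemma mul_le_mul_right' {y z : A} (x : A) (h : y ≤ z) : R.mul y x ≤ R.mul z x := by
  rw [R.mul_comm y x, R.mul_comm z x]
  exact R.mul_le_mul_left' x h

lemma top_mul (x : A) : R.mul ⊤ x = x := by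
  rw [R.mul_comm, R.mul_top]

lemma mul_le_left_s10 (x y : A) : R.mul x y ≤ x :=
  (R.mul_le_mul_left' x le_top).trans_eq (R.mul_top x)

lemma mul_le_right_s10 (x y : A) : R.mul x y ≤ y := by
  rw [R.mul_comm]
  exact R.mul_le_left_s10 y x

lemma mul_sup_s10 (x y z : A) : R.mul x (y ⊔ z) = R.mul x y ⊔ R.mul x z := by
  refine le_antisymm ?_ (sup_le (R.mul_le_mul_left' x le_sup_left)
    (R.mul_le_mul_left' x le_sup_right))
  rw [R.adj]
  exact sup_le ((R.adj _ _ _).mp le_sup_left) ((R.adj _ _ _).mp le_sup_right)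

lemma sup_mul_sup_le (a x y : A) : R.mul (a ⊔ x) (a ⊔ y) ≤ a ⊔ R.mul x y := by
  rw [mul_sup_s10, R.mul_comm (a ⊔ x) y, mul_sup_s10, R.mul_comm y x]
  exact sup_le ((R.mul_le_right_s10 _ _).trans le_sup_left)
    (sup_le ((R.mul_le_right_s10 _ _).trans le_sup_left) le_sup_right)

lemma mul_mul_sup_le {u v f g c : A} (hu : R.mul u f ≤ c) (hv : R.mul v g ≤ c) :
    R.mul (R.mul u v) (f ⊔ g) ≤ c := by
  rw [mul_sup_s10]
  exact sup_le ((R.mul_le_mul_right' f (R.mul_le_left_s10 u v)).trans hu)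
    ((R.mul_le_mul_right' g (R.mul_le_right_s10 u v)).trans hv)

lemma foldr_mul_map_sup_le (a : A) (l : List A) :
    (l.map (a ⊔ ·)).foldr R.mul ⊤ ≤ a ⊔ l.foldr R.mul ⊤ := by
  induction l with
  | nil => exact le_sup_right
  | cons x l ih => exact (R.mul_le_mul_left' _ ih).trans (R.sup_mul_sup_le a x _)

lemma foldr_mul_append (l m : List A) :
    (l ++ m).foldr R.mul ⊤ = R.mul (l.foldr R.mul ⊤) (m.foldr R.mul ⊤) := by
  induction l with
  | nil => exact (R.top_mul _).symm
  | cons x l ih => rw [List.cons_append, List.foldr_cons, List.foldr_cons, ih, R.mul_assoc]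

lemma mem_perp_of_le {a x y : A} (hx : x ∈ R.perp a) (hxy : x ≤ y) : y ∈ R.perp a :=
  top_le_iff.mp (hx ▸ sup_le_sup_right hxy a)

lemma perp_mono {a b : A} (h : a ≤ b) : R.perp a ⊆ R.perp b :=
  fun x hx => top_le_iff.mp (hx ▸ sup_le_sup_left h x)

lemma mul_mem_perp {a x y : A} (hx : x ∈ R.perp a) (hy : y ∈ R.perp a) :
    R.mul x y ∈ R.perp a := by
  have h := R.sup_mul_sup_le a x y
  rw [sup_comm a x, sup_comm a y, hx, hy, R.mul_top, sup_comm] at h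
  exact top_le_iff.mp h

lemma mem_perp_mul {a b x : A} (ha : x ∈ R.perp a) (hb : x ∈ R.perp b) :
    x ∈ R.perp (R.mul a b) := by
  have h := R.sup_mul_sup_le x a b
  rw [ha, hb, R.mul_top] at h
  exact top_le_iff.mp h

namespace IsFilter

variable {R} {F : Set A}

lemma mem_of_le (hF : R.IsFilter F) {a b : A} (ha : a ∈ F) (hab : a ≤ b) : b ∈ F :=
  sup_eq_right.mpr hab ▸ hF.2.2 a ha b

lemma top_mem (hF : R.IsFilter F) : ⊤ ∈ F :=
  hF.mem_of_le hF.1.some_mem le_top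

lemma foldr_mul_mem (hF : R.IsFilter F) {l : List A} (hl : ∀ x ∈ l, x ∈ F) :
    l.foldr R.mul ⊤ ∈ F := by
  induction l with
  | nil => exact hF.top_mem
  | cons x l ih =>
    exact hF.2.1 x (hl x List.mem_cons_self) _ (ih fun y hy => hl y (List.mem_cons_of_mem x hy))

end IsFilter

lemma isFilter_gen (X : Set A) : R.IsFilter (R.gen X) := by
  refine ⟨⟨⊤, [], fun x hx => absurd hx List.not_mem_nil, le_top⟩, ?_, ?_⟩
  · rintro a ⟨l₁, hl₁, h₁⟩ b ⟨l₂, hl₂, h₂⟩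
    refine ⟨l₁ ++ l₂, fun x hx => (List.mem_append.mp hx).elim (hl₁ x) (hl₂ x), ?_⟩
    rw [foldr_mul_append]
    exact (R.mul_le_mul_left' _ h₂).trans (R.mul_le_mul_right' _ h₁)
  · rintro a ⟨l, hl, h⟩ y
    exact ⟨l, hl, h.trans le_sup_left⟩

lemma subset_gen (X : Set A) : X ⊆ R.gen X := fun a ha =>
  ⟨[a], fun _ hx => List.mem_singleton.mp hx ▸ ha, (R.mul_top a).le⟩

lemma gen_subset {X F : Set A} (hF : R.IsFilter F) (hXF : X ⊆ F) : R.gen X ⊆ F :=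
  fun _ ⟨_, hl, h⟩ => hF.mem_of_le (hF.foldr_mul_mem fun x hx => hXF (hl x hx)) h

lemma gen_mono {X Y : Set A} (h : X ⊆ Y) : R.gen X ⊆ R.gen Y :=
  fun _ ⟨l, hl, hle⟩ => ⟨l, fun x hx => h (hl x hx), hle⟩

lemma mem_sink_iff {H : Set A} {a : A} :
    a ∈ R.sink H ↔ ∀ c, ∃ u ∈ R.perp a, ∃ h ∈ H, R.mul u h ≤ c :=
  Set.eq_univ_iff_forall

lemma sink_mono {H H' : Set A} (h : H ⊆ H') : R.sink H ⊆ R.sink H' := by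
  simp only [Set.subset_def, mem_sink_iff]
  intro a ha c
  obtain ⟨u, hu, g, hg, hle⟩ := ha c
  exact ⟨u, hu, g, h hg, hle⟩

lemma isFilter_sink {H : Set A} (hH : R.IsFilter H) : R.IsFilter (R.sink H) := by
  refine ⟨⟨⊤, (R.mem_sink_iff).mpr fun c => ⟨c, sup_top_eq c, ⊤, hH.top_mem,
    (R.mul_top c).le⟩⟩, ?_, ?_⟩
  · intro a ha b hb
    rw [mem_sink_iff] at ha hb ⊢
    intro c
    obtain ⟨u, hu, g₁, hg₁, hle₁⟩ := ha c
    obtain ⟨v, hv, g₂, hg₂, hle₂⟩ := hb c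
    refine ⟨u ⊔ v, R.mem_perp_mul (R.mem_perp_of_le hu le_sup_left)
      (R.mem_perp_of_le hv le_sup_right), R.mul g₁ g₂, hH.2.1 g₁ hg₁ g₂ hg₂, ?_⟩
    rw [R.mul_comm] at hle₁ hle₂ ⊢
    exact R.mul_mul_sup_le hle₁ hle₂
  · intro a ha y
    rw [mem_sink_iff] at ha ⊢
    intro c
    obtain ⟨u, hu, g, hg, hle⟩ := ha c
    exact ⟨u, R.perp_mono le_sup_left hu, g, hg, hle⟩

lemma pureOn_gen_sUnion {𝒻 : Set (Set A)} (h𝒻 : ∀ G ∈ 𝒻, R.PureOn G) :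
    R.PureOn (R.gen (⋃₀ 𝒻)) := by
  refine R.gen_subset (R.isFilter_sink (R.isFilter_gen _)) ?_
  rintro a ⟨G, hG, haG⟩
  exact R.sink_mono (fun _ hx => R.subset_gen (⋃₀ 𝒻) ⟨G, hG, hx⟩) (h𝒻 G hG a haG)

lemma pureOn_inter {F G : Set A} (hF : R.IsFilter F) (hFp : R.PureOn F) (hG : R.IsFilter G)
    (hGp : R.PureOn G) : R.PureOn (F ∩ G) := by
  rintro a ⟨haF, haG⟩
  refine (R.mem_sink_iff).mpr fun c => ?_
  obtain ⟨u, hu, f, hf, hle₁⟩ := (R.mem_sink_iff).mp (hFp a haF) c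
  obtain ⟨v, hv, g, hg, hle₂⟩ := (R.mem_sink_iff).mp (hGp a haG) c
  exact ⟨R.mul u v, R.mul_mem_perp hu hv, f ⊔ g,
    ⟨hF.2.2 f hf g, sup_comm g f ▸ hG.2.2 g hg f⟩, R.mul_mul_sup_le hle₁ hle₂⟩

lemma inter_gen_sUnion {F : Set A} {𝒻 : Set (Set A)} (hF : R.IsFilter F)
    (h𝒻 : ∀ G ∈ 𝒻, R.IsFilter G) : F ∩ R.gen (⋃₀ 𝒻) = R.gen (⋃ G ∈ 𝒻, F ∩ G) := by
  have hsub : (⋃ G ∈ 𝒻, F ∩ G) ⊆ F ∩ ⋃₀ 𝒻 := by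
    simp only [Set.iUnion_subset_iff]
    exact fun G hG x hx => ⟨hx.1, G, hG, hx.2⟩
  refine Set.Subset.antisymm ?_ fun a ha =>
    ⟨R.gen_subset hF (fun x hx => (hsub hx).1) ha, R.gen_mono (fun x hx => (hsub hx).2) ha⟩
  rintro a ⟨haF, l, hl, hle⟩
  refine ⟨l.map (a ⊔ ·), ?_, (R.foldr_mul_map_sup_le a l).trans (sup_le le_rfl hle)⟩
  intro x hx
  obtain ⟨y, hy, rfl⟩ := List.mem_map.mp hx
  obtain ⟨G, hG, hyG⟩ := hl y hy
  exact Set.mem_biUnion hG ⟨hF.2.2 a haF y, sup_comm y a ▸ (h𝒻 G hG).2.2 y hyG a⟩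

end ResiduatedLattice

theorem stmt10 (R : ResiduatedLattice A) :
    (∀ 𝒻 : Set (Set A), (∀ G ∈ 𝒻, R.IsFilter G ∧ R.PureOn G) →
      R.PureOn (R.gen (⋃₀ 𝒻))) ∧
    (∀ F G : Set A, R.IsFilter F → R.PureOn F → R.IsFilter G → R.PureOn G →
      R.PureOn (F ∩ G)) ∧
    (∀ F : Set A, ∀ 𝒻 : Set (Set A), R.IsFilter F → R.PureOn F →
      (∀ G ∈ 𝒻, R.IsFilter G ∧ R.PureOn G) →
      F ∩ R.gen (⋃₀ 𝒻) = R.gen (⋃ G ∈ 𝒻, F ∩ G)) :=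
  ⟨fun _ h𝒻 => R.pureOn_gen_sUnion fun G hG => (h𝒻 G hG).2,
    fun _ _ hF hFp hG hGp => R.pureOn_inter hF hFp hG hGp,
    fun _ _ hF _ h𝒻 => R.inter_gen_sUnion hF fun G hG => (h𝒻 G hG).1⟩
end

section
/- Let A be a residuated lattice and F a pure filter of A (i.e., a⊥ ⋎ F = A for all a ∈ F). Then F equals {a ∈ A | d(a) ⊆ Supp(F)}, where d(a) = {𝔭 prime | a ∉ 𝔭} and Supp(F) = ⋃_{f ∈ F} {𝔭 prime | f⊥ ⊆ 𝔭}. -/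
open ResiduatedLattice

variable {A : Type*} [Lattice A] [BoundedOrder A]

namespace StmtAux

variable (R : ResiduatedLattice A)

lemma mul_mono_right {x a b : A} (h : a ≤ b) : R.mul x a ≤ R.mul x b := by
  have hb : b ≤ R.himp x (R.mul x b) := (R.adj _ _ _).mp le_rfl
  exact (R.adj _ _ _).mpr (h.trans hb)

lemma mul_mono {a b c d : A} (h1 : a ≤ b) (h2 : c ≤ d) : R.mul a c ≤ R.mul b d :=
  calc R.mul a c ≤ R.mul a d := mul_mono_right R h2
    _ = R.mul d a := R.mul_comm ..
    _ ≤ R.mul d b := mul_mono_right R h1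
    _ = R.mul b d := R.mul_comm ..

lemma mul_le_right {a b : A} : R.mul a b ≤ b :=
  calc R.mul a b ≤ R.mul ⊤ b := mul_mono R le_top le_rfl
    _ = R.mul b ⊤ := R.mul_comm ..
    _ = b := R.mul_top b

lemma mul_le_left {a b : A} : R.mul a b ≤ a := by
  rw [R.mul_comm]; exact mul_le_right R

lemma mul_sup (c a b : A) : R.mul c (a ⊔ b) = R.mul c a ⊔ R.mul c b := by
  apply le_antisymm
  · exact (R.adj _ _ _).mpr (sup_le ((R.adj _ _ _).mp le_sup_left)
      ((R.adj _ _ _).mp le_sup_right))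
  · exact sup_le (mul_mono_right R le_sup_left) (mul_mono_right R le_sup_right)

lemma pow_add (x : A) (n m : ℕ) : R.pow x (n + m) = R.mul (R.pow x n) (R.pow x m) := by
  induction n with
  | zero => simp [ResiduatedLattice.pow]; rw [R.mul_comm, R.mul_top]
  | succ n ih =>
    have : n + 1 + m = (n + m) + 1 := by omega
    rw [this]
    show R.mul x (R.pow x (n + m)) = _
    rw [ih]
    show _ = R.mul (R.mul x (R.pow x n)) (R.pow x m)
    rw [R.mul_assoc]

lemma pow_sup_le (x y : A) : ∀ n m : ℕ, R.pow (x ⊔ y) (n + m) ≤ R.pow x n ⊔ R.pow y m := by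
  intro n
  induction n with
  | zero => intro m; exact le_trans le_top le_sup_left
  | succ n ih =>
    intro m
    induction m with
    | zero => exact le_trans le_top le_sup_right
    | succ m ihm =>
      have e1 : n + 1 + (m + 1) = (n + (m + 1)) + 1 := by omega
      have step : R.pow (x ⊔ y) (n + 1 + (m + 1))
          = R.mul x (R.pow (x ⊔ y) (n + (m + 1))) ⊔
            R.mul y (R.pow (x ⊔ y) (n + 1 + m)) := by
        rw [e1]
        show R.mul (x ⊔ y) (R.pow (x ⊔ y) (n + (m + 1))) = _
        rw [R.mul_comm, mul_sup R, R.mul_comm _ x, R.mul_comm _ y]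
        have e2 : n + (m + 1) = n + 1 + m := by omega
        rw [e2]
      rw [step]
      apply sup_le
      · calc R.mul x (R.pow (x ⊔ y) (n + (m + 1)))
            ≤ R.mul x (R.pow x n ⊔ R.pow y (m + 1)) := mul_mono_right R (ih (m + 1))
          _ = R.mul x (R.pow x n) ⊔ R.mul x (R.pow y (m + 1)) := mul_sup R ..
          _ ≤ R.pow x (n + 1) ⊔ R.pow y (m + 1) :=
              sup_le le_sup_left (le_trans (mul_le_right R) le_sup_right)
      · calc R.mul y (R.pow (x ⊔ y) (n + 1 + m))
            ≤ R.mul y (R.pow x (n + 1) ⊔ R.pow y m) := mul_mono_right R ihm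
          _ = R.mul y (R.pow x (n + 1)) ⊔ R.mul y (R.pow y m) := mul_sup R ..
          _ ≤ R.pow x (n + 1) ⊔ R.pow y (m + 1) :=
              sup_le (le_trans (mul_le_right R) le_sup_left) le_sup_right

variable {F : Set A}

lemma top_mem (hF : R.IsFilter F) : ⊤ ∈ F := by
  obtain ⟨⟨x, hx⟩, _, hjoin⟩ := hF
  simpa using hjoin x hx ⊤

lemma mem_of_le (hF : R.IsFilter F) {x y : A} (hx : x ∈ F) (h : x ≤ y) : y ∈ F := by
  have := hF.2.2 x hx y
  rwa [sup_eq_right.mpr h] at this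

lemma pow_mem (hF : R.IsFilter F) {x : A} (hx : x ∈ F) (n : ℕ) : R.pow x n ∈ F := by
  induction n with
  | zero => exact top_mem R hF
  | succ n ih => exact hF.2.1 x hx _ ih

lemma fgen_filter (hF : R.IsFilter F) (x : A) : R.IsFilter (R.FGen F x) := by
  refine ⟨⟨x, ⊤, top_mem R hF, 1, ?_⟩, ?_, ?_⟩
  · show R.mul ⊤ (R.pow x 1) ≤ x
    rw [R.mul_comm, R.mul_top]
    show R.mul x ⊤ ≤ x
    rw [R.mul_top]
  · rintro a ⟨f, hf, n, hfn⟩ b ⟨g, hg, m, hgm⟩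
    refine ⟨R.mul f g, hF.2.1 f hf g hg, n + m, ?_⟩
    rw [pow_add R]
    calc R.mul (R.mul f g) (R.mul (R.pow x n) (R.pow x m))
        = R.mul (R.mul f (R.pow x n)) (R.mul g (R.pow x m)) := by
          rw [R.mul_assoc, R.mul_assoc, ← R.mul_assoc g, R.mul_comm g (R.pow x n),
            R.mul_assoc]
      _ ≤ R.mul a b := mul_mono R hfn hgm
  · rintro a ⟨f, hf, n, hfn⟩ y
    exact ⟨f, hf, n, le_trans hfn le_sup_left⟩

lemma subset_fgen (hF : R.IsFilter F) (x : A) : F ⊆ R.FGen F x := by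
  intro f hf
  refine ⟨f, hf, 0, ?_⟩
  show R.mul f ⊤ ≤ f
  rw [R.mul_top]

lemma mem_fgen (hF : R.IsFilter F) (x : A) : x ∈ R.FGen F x := by
  refine ⟨⊤, top_mem R hF, 1, ?_⟩
  show R.mul ⊤ (R.mul x ⊤) ≤ x
  rw [R.mul_top, R.mul_comm, R.mul_top]

/-- Every filter not containing `a` extends to a prime filter not containing `a`. -/
lemma exists_prime (hF : R.IsFilter F) {a : A} (ha : a ∉ F) :
    ∃ p : Set A, R.IsPrime p ∧ F ⊆ p ∧ a ∉ p := by
  set S : Set (Set A) := {G | R.IsFilter G ∧ F ⊆ G ∧ a ∉ G} with hS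
  have hub : ∀ c ⊆ S, IsChain (· ⊆ ·) c → c.Nonempty →
      ∃ ub ∈ S, ∀ s ∈ c, s ⊆ ub := by
    intro c hc hchain ⟨G0, hG0⟩
    refine ⟨⋃₀ c, ⟨⟨?_, ?_, ?_⟩, ?_, ?_⟩, fun s hs => Set.subset_sUnion_of_mem hs⟩
    · obtain ⟨x, hx⟩ := (hc hG0).1.1
      exact ⟨x, G0, hG0, hx⟩
    · rintro x ⟨G1, hG1, hx⟩ y ⟨G2, hG2, hy⟩
      rcases hchain.total hG1 hG2 with h | h
      · exact ⟨G2, hG2, (hc hG2).1.2.1 x (h hx) y hy⟩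
      · exact ⟨G1, hG1, (hc hG1).1.2.1 x hx y (h hy)⟩
    · rintro x ⟨G1, hG1, hx⟩ y
      exact ⟨G1, hG1, (hc hG1).1.2.2 x hx y⟩
    · exact (hc hG0).2.1.trans (Set.subset_sUnion_of_mem hG0)
    · rintro ⟨G1, hG1, hx⟩
      exact (hc hG1).2.2 hx
  obtain ⟨p, hFp, hpS, hpmax⟩ := zorn_subset_nonempty S hub F ⟨hF, le_rfl, ha⟩
  obtain ⟨hpfil, hFsub, hap⟩ := hpS
  refine ⟨p, ⟨hpfil, ?_, ?_⟩, hFp, hap⟩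
  · intro h; exact hap (h ▸ Set.mem_univ a)
  · intro x y hxy
    by_contra hcon
    push_neg at hcon
    obtain ⟨hx, hy⟩ := hcon
    -- FGen p x contains a
    have hax : a ∈ R.FGen p x := by
      by_contra hax
      have : R.FGen p x ∈ S := ⟨fgen_filter R hpfil x, hFsub.trans (subset_fgen R hpfil x), hax⟩
      have := hpmax this (subset_fgen R hpfil x)
      exact hx (this (mem_fgen R hpfil x))
    have hay : a ∈ R.FGen p y := by
      by_contra hay
      have : R.FGen p y ∈ S := ⟨fgen_filter R hpfil y, hFsub.trans (subset_fgen R hpfil y), hay⟩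
      have := hpmax this (subset_fgen R hpfil y)
      exact hy (this (mem_fgen R hpfil y))
    obtain ⟨f, hf, n, hfn⟩ := hax
    obtain ⟨g, hg, m, hgm⟩ := hay
    have hxyp : R.pow (x ⊔ y) (n + m) ∈ p := pow_mem R hpfil hxy _
    have hmemp : R.mul (R.mul f g) (R.pow (x ⊔ y) (n + m)) ∈ p :=
      hpfil.2.1 _ (hpfil.2.1 f hf g hg) _ hxyp
    have hle : R.mul (R.mul f g) (R.pow (x ⊔ y) (n + m)) ≤ a := by
      calc R.mul (R.mul f g) (R.pow (x ⊔ y) (n + m))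
          ≤ R.mul (R.mul f g) (R.pow x n ⊔ R.pow y m) :=
            mul_mono_right R (pow_sup_le R x y n m)
        _ = R.mul (R.mul f g) (R.pow x n) ⊔ R.mul (R.mul f g) (R.pow y m) := mul_sup R ..
        _ ≤ a ⊔ a := by
            apply sup_le
            · apply le_trans _ le_sup_left
              calc R.mul (R.mul f g) (R.pow x n)
                  = R.mul g (R.mul f (R.pow x n)) := by
                    rw [R.mul_comm f g, R.mul_assoc]
                _ ≤ R.mul f (R.pow x n) := mul_le_right R
                _ ≤ a := hfn
            · apply le_trans _ le_sup_right
              calc R.mul (R.mul f g) (R.pow y m)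
                  = R.mul f (R.mul g (R.pow y m)) := by rw [R.mul_assoc]
                _ ≤ R.mul g (R.pow y m) := mul_le_right R
                _ ≤ a := hgm
        _ = a := sup_idem a
    exact absurd (mem_of_le R hpfil hmemp hle) hap

end StmtAux

open StmtAux in
theorem stmt11 (R : ResiduatedLattice A) (F : Set A)
    (hF : R.IsFilter F) (hpure : R.PureOn F) :
    F = {a : A | {p : Set A | R.IsPrime p ∧ a ∉ p} ⊆
          ⋃ f ∈ F, {p : Set A | R.IsPrime p ∧ R.perp f ⊆ p}} := by
  ext a
  simp only [Set.mem_setOf_eq]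
  constructor
  · intro ha p hp
    simp only [Set.mem_setOf_eq] at hp
    obtain ⟨hprime, hap⟩ := hp
    refine Set.mem_biUnion ha ⟨hprime, ?_⟩
    intro x hx
    have htop : (⊤ : A) ∈ p := top_mem R hprime.1
    have : x ⊔ a ∈ p := by rw [hx]; exact htop
    rcases hprime.2.2 x a this with h | h
    · exact h
    · exact absurd h hap
  · intro h
    by_contra ha
    obtain ⟨p, hprime, hFp, hap⟩ := exists_prime R hF ha
    have hpmem : p ∈ ⋃ f ∈ F, {p : Set A | R.IsPrime p ∧ R.perp f ⊆ p} :=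
      h ⟨hprime, hap⟩
    simp only [Set.mem_iUnion, Set.mem_setOf_eq] at hpmem
    obtain ⟨f, hf, _, hperp⟩ := hpmem
    have hjoin := hpure f hf
    apply hprime.2.1
    apply Set.eq_univ_of_univ_subset
    intro c _
    have : c ∈ R.FJoin (R.perp f) F := by rw [hjoin]; exact Set.mem_univ c
    obtain ⟨u, hu, g, hg, hle⟩ := this
    exact mem_of_le R hprime.1 (hprime.1.2.1 u (hperp hu) g (hFp hg)) hle
end

section
/- Any two distinct filters of a residuated lattice that are simultaneously prime and pure are comaximal: if 𝔭₁ ≠ 𝔭₂ are both prime and pure, then 𝔭₁ ⋎ 𝔭₂ = A. -/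
open ResiduatedLattice

variable {A : Type*} [Lattice A] [BoundedOrder A]

theorem stmt13 (R : ResiduatedLattice A) (p₁ p₂ : Set A)
    (h₁ : R.IsPrime p₁) (h₁' : R.PureOn p₁)
    (h₂ : R.IsPrime p₂) (h₂' : R.PureOn p₂)
    (hne : p₁ ≠ p₂) :
    R.FJoin p₁ p₂ = Set.univ := by
  -- filters contain ⊤
  have htop : ∀ F : Set A, R.IsFilter F → ⊤ ∈ F := by
    rintro F ⟨⟨x₀, hx₀⟩, -, hsup⟩
    have := hsup x₀ hx₀ ⊤
    simpa using this
  -- key step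
  have key : ∀ (q₁ q₂ : Set A), R.IsPrime q₁ → R.PureOn q₁ → R.IsPrime q₂ →
      (∃ a, a ∈ q₁ ∧ a ∉ q₂) → ∀ c : A, ∃ f ∈ q₁, ∃ g ∈ q₂, R.mul f g ≤ c := by
    rintro q₁ q₂ hq₁ hq₁' hq₂ ⟨a, ha₁, ha₂⟩ c
    have hbot : (⊥ : A) ∈ R.FJoin (R.perp a) q₁ := by
      rw [hq₁' a ha₁]; trivial
    obtain ⟨x, hx, f, hf, hxf⟩ := hbot
    -- x ⊔ a = ⊤ ∈ q₂, prime ⇒ x ∈ q₂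
    have hx2 : x ∈ q₂ := by
      rcases hq₂.2.2 x a (by rw [hx]; exact htop q₂ hq₂.1) with h | h
      · exact h
      · exact absurd h ha₂
    exact ⟨f, hf, x, hx2, by rw [R.mul_comm]; exact le_trans hxf bot_le⟩
  ext c
  simp only [Set.mem_univ, iff_true]
  by_cases hsub : p₁ ⊆ p₂
  · have : ∃ a, a ∈ p₂ ∧ a ∉ p₁ := by
      by_contra h
      push_neg at h
      exact hne (Set.Subset.antisymm hsub h)
    obtain ⟨f, hf, g, hg, h⟩ := key p₂ p₁ h₂ h₂' h₁ this c
    exact ⟨g, hg, f, hf, by rwa [R.mul_comm]⟩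
  · have : ∃ a, a ∈ p₁ ∧ a ∉ p₂ := by
      by_contra h; push_neg at h; exact hsub h
    exact key p₁ p₂ h₁ h₁' h₂ this c
end

section
/- Let A be a residuated lattice and 𝔭 a purely-prime filter. Then for every complemented element e of A, 𝔭 contains exactly one of e or ¬e. -/
open ResiduatedLattice

variable {A : Type*} [Lattice A] [BoundedOrder A]

section Aux

variable (R : ResiduatedLattice A)

lemma aux_mul_le_mul_right {z z' : A} (h : z ≤ z') (x : A) : R.mul x z ≤ R.mul x z' := by
  rw [R.adj]
  exact le_trans h ((R.adj x (R.mul x z') z').mp le_rfl)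

lemma aux_mul_le_left (x y : A) : R.mul x y ≤ x := by
  have := aux_mul_le_mul_right R (le_top (a := y)) x
  rwa [R.mul_top] at this

lemma aux_mul_le_right (x y : A) : R.mul x y ≤ y := by
  rw [R.mul_comm]; exact aux_mul_le_left R y x

lemma aux_mul_le_mul {x x' z z' : A} (hx : x ≤ x') (hz : z ≤ z') :
    R.mul x z ≤ R.mul x' z' := by
  calc R.mul x z ≤ R.mul x z' := aux_mul_le_mul_right R hz x
    _ = R.mul z' x := R.mul_comm _ _
    _ ≤ R.mul z' x' := aux_mul_le_mul_right R hx z'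
    _ = R.mul x' z' := R.mul_comm _ _

lemma aux_mul_sup (a b c : A) : R.mul a (b ⊔ c) = R.mul a b ⊔ R.mul a c := by
  apply le_antisymm
  · rw [R.adj]
    exact sup_le ((R.adj _ _ _).mp le_sup_left) ((R.adj _ _ _).mp le_sup_right)
  · exact sup_le (aux_mul_le_mul_right R le_sup_left a) (aux_mul_le_mul_right R le_sup_right a)

lemma aux_sup_mul (a b c : A) : R.mul (a ⊔ b) c = R.mul a c ⊔ R.mul b c := by
  rw [R.mul_comm, aux_mul_sup, R.mul_comm c a, R.mul_comm c b]

lemma aux_mem_of_le {F : Set A} (hF : R.IsFilter F) {x y : A} (hx : x ∈ F) (hxy : x ≤ y) :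
    y ∈ F := by
  have := hF.2.2 x hx y
  rwa [sup_eq_right.mpr hxy] at this

/-- powers are below the base (for n ≥ 1) -/
lemma aux_pow_succ_le (u : A) (n : ℕ) : R.pow u (n + 1) ≤ u := aux_mul_le_left R u _

lemma aux_pow_le_pow_succ (u : A) (n : ℕ) : R.pow u (n + 1) ≤ R.pow u n :=
  aux_mul_le_right R u _

variable {u v : A}

lemma aux_pow_sup_top (hsup : u ⊔ v = ⊤) (n : ℕ) : R.pow u n ⊔ v = ⊤ := by
  induction n with
  | zero => simp [ResiduatedLattice.pow]
  | succ n ih =>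
    apply le_antisymm le_top
    calc (⊤ : A) = R.mul (u ⊔ v) (R.pow u n ⊔ v) := by rw [hsup, ih, R.mul_top]
      _ = (R.mul u (R.pow u n) ⊔ R.mul u v) ⊔ (R.mul v (R.pow u n) ⊔ R.mul v v) := by
          rw [aux_sup_mul, aux_mul_sup, aux_mul_sup]
      _ ≤ R.pow u (n + 1) ⊔ v := by
          apply sup_le (sup_le _ _) (sup_le _ _)
          · exact le_sup_left
          · exact le_trans (aux_mul_le_right R u v) le_sup_right
          · exact le_trans (aux_mul_le_left R v _) le_sup_right
          · exact le_trans (aux_mul_le_left R v v) le_sup_right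

lemma aux_mul_pow_succ_le_bot (hmul : R.mul u v ≤ ⊥) (n : ℕ) :
    R.mul v (R.pow u (n + 1)) ≤ ⊥ := by
  calc R.mul v (R.pow u (n + 1)) ≤ R.mul v u :=
        aux_mul_le_mul_right R (aux_pow_succ_le R u n) v
    _ = R.mul u v := R.mul_comm v u
    _ ≤ ⊥ := hmul

lemma aux_pow_sup_pow (hsup : u ⊔ v = ⊤) (hmul : R.mul u v ≤ ⊥) (n m : ℕ) :
    R.pow u n ⊔ R.pow v m = ⊤ := by
  have h1 : R.pow u n ⊔ v = ⊤ := aux_pow_sup_top R hsup n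
  have h2 : R.pow v m ⊔ u = ⊤ := aux_pow_sup_top R (by rwa [sup_comm]) m
  apply le_antisymm le_top
  calc (⊤ : A) = R.mul (R.pow u n ⊔ v) (R.pow v m ⊔ u) := by rw [h1, h2, R.mul_top]
    _ = (R.mul (R.pow u n) (R.pow v m) ⊔ R.mul (R.pow u n) u)
        ⊔ (R.mul v (R.pow v m) ⊔ R.mul v u) := by rw [aux_sup_mul, aux_mul_sup, aux_mul_sup]
    _ ≤ R.pow u n ⊔ R.pow v m := by
        apply sup_le (sup_le _ _) (sup_le _ _)
        · exact le_trans (aux_mul_le_left R _ _) le_sup_left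
        · exact le_trans (aux_mul_le_left R _ _) le_sup_left
        · exact le_trans (aux_mul_le_right R _ _) le_sup_right
        · calc R.mul v u = R.mul u v := R.mul_comm v u
            _ ≤ ⊥ := hmul
            _ ≤ _ := bot_le

lemma aux_subset_FGen {p : Set A} (x : A) : p ⊆ R.FGen p x := by
  intro f hf
  exact ⟨f, hf, 0, by rw [show R.pow x 0 = ⊤ from rfl, R.mul_top]⟩

lemma aux_FGen_isFilter {p : Set A} (hF : R.IsFilter p) (x : A) :
    R.IsFilter (R.FGen p x) := by
  obtain ⟨f0, hf0⟩ := hF.1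
  refine ⟨⟨f0, aux_subset_FGen R x hf0⟩, ?_, ?_⟩
  · rintro a ⟨f, hf, n, hfn⟩ b ⟨g, hg, m, hgm⟩
    refine ⟨R.mul f g, hF.2.1 f hf g hg, n + m, ?_⟩
    have hpow : ∀ k l : ℕ, R.pow x (k + l) = R.mul (R.pow x k) (R.pow x l) := by
      intro k l
      induction l with
      | zero => rw [Nat.add_zero, show R.pow x 0 = ⊤ from rfl, R.mul_top]
      | succ l ih =>
        show R.pow x (k + l + 1) = _
        show R.mul x (R.pow x (k + l)) = _
        rw [ih, show R.pow x (l+1) = R.mul x (R.pow x l) from rfl,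
          ← R.mul_assoc, R.mul_comm x (R.pow x k), R.mul_assoc]
    calc R.mul (R.mul f g) (R.pow x (n + m))
        = R.mul (R.mul f g) (R.mul (R.pow x n) (R.pow x m)) := by rw [hpow]
      _ = R.mul (R.mul f (R.pow x n)) (R.mul g (R.pow x m)) := by
          rw [R.mul_assoc, R.mul_assoc, ← R.mul_assoc g, R.mul_comm g (R.pow x n),
            R.mul_assoc]
      _ ≤ R.mul a b := aux_mul_le_mul R hfn hgm
  · rintro a ⟨f, hf, n, hfn⟩ b
    exact ⟨f, hf, n, le_trans hfn le_sup_left⟩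

lemma aux_FGen_pure {p : Set A} (hF : R.IsFilter p) (hpure : R.PureOn p)
    (hsup : u ⊔ v = ⊤) (hmul : R.mul u v ≤ ⊥) : R.PureOn (R.FGen p u) := by
  rintro a ⟨f, hf, n, hfn⟩
  apply Set.eq_univ_of_forall
  intro c
  have hc : c ∈ R.FJoin (R.perp f) p := by rw [hpure f hf]; trivial
  obtain ⟨g, hg, h, hh, hgh⟩ := hc
  refine ⟨g ⊔ v, ?_, R.mul h (R.pow u (n + 1)),
    ⟨h, hh, n + 1, le_rfl⟩, ?_⟩
  · -- g ⊔ v ∈ perp a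
    show (g ⊔ v) ⊔ a = ⊤
    apply le_antisymm le_top
    calc (⊤ : A) = R.mul (g ⊔ f) (R.pow u n ⊔ v) := by
          rw [hg, aux_pow_sup_top R hsup n, R.mul_top]
      _ = (R.mul g (R.pow u n) ⊔ R.mul g v) ⊔ (R.mul f (R.pow u n) ⊔ R.mul f v) := by
          rw [aux_sup_mul, aux_mul_sup, aux_mul_sup]
      _ ≤ (g ⊔ v) ⊔ a := by
          apply sup_le (sup_le _ _) (sup_le _ _)
          · exact le_trans (aux_mul_le_left R _ _) (le_trans le_sup_left le_sup_left)
          · exact le_trans (aux_mul_le_left R _ _) (le_trans le_sup_left le_sup_left)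
          · exact le_trans hfn le_sup_right
          · exact le_trans (aux_mul_le_right R _ _)
              (le_trans le_sup_right le_sup_left)
  · -- (g ⊔ v) ⊙ (h ⊙ u^(n+1)) ≤ c
    calc R.mul (g ⊔ v) (R.mul h (R.pow u (n + 1)))
        = R.mul g (R.mul h (R.pow u (n + 1)))
          ⊔ R.mul v (R.mul h (R.pow u (n + 1))) := aux_sup_mul R g v _
      _ ≤ c := by
          apply sup_le
          · calc R.mul g (R.mul h (R.pow u (n + 1)))
                ≤ R.mul g h := aux_mul_le_mul_right R (aux_mul_le_left R h _) g
              _ ≤ c := hgh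
          · calc R.mul v (R.mul h (R.pow u (n + 1)))
                ≤ R.mul v (R.pow u (n + 1)) :=
                  aux_mul_le_mul_right R (aux_mul_le_right R h _) v
              _ ≤ ⊥ := aux_mul_pow_succ_le_bot R hmul n
              _ ≤ c := bot_le

lemma aux_FGen_inter {p : Set A} (hF : R.IsFilter p)
    (hsup : u ⊔ v = ⊤) (hmul : R.mul u v ≤ ⊥) :
    R.FGen p u ∩ R.FGen p v = p := by
  apply Set.Subset.antisymm
  · rintro x ⟨⟨f, hf, n, hfn⟩, ⟨g, hg, m, hgm⟩⟩
    have hfg : R.mul f g ∈ p := hF.2.1 f hf g hg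
    apply aux_mem_of_le R hF hfg
    calc R.mul f g = R.mul (R.mul f g) (R.pow u n ⊔ R.pow v m) := by
          rw [aux_pow_sup_pow R hsup hmul n m, R.mul_top]
      _ = R.mul (R.mul f g) (R.pow u n) ⊔ R.mul (R.mul f g) (R.pow v m) :=
          aux_mul_sup R _ _ _
      _ ≤ x := by
          apply sup_le
          · calc R.mul (R.mul f g) (R.pow u n)
                ≤ R.mul f (R.pow u n) := aux_mul_le_mul R (aux_mul_le_left R f g) le_rfl
              _ ≤ x := hfn
          · calc R.mul (R.mul f g) (R.pow v m)
                ≤ R.mul g (R.pow v m) := aux_mul_le_mul R (aux_mul_le_right R f g) le_rfl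
              _ ≤ x := hgm
  · exact fun f hf => ⟨aux_subset_FGen R u hf, aux_subset_FGen R v hf⟩

lemma aux_mem_FGen_self {p : Set A} (hF : R.IsFilter p) (x : A) : x ∈ R.FGen p x := by
  obtain ⟨f, hf⟩ := hF.1
  refine ⟨f, hf, 1, ?_⟩
  show R.mul f (R.mul x (R.pow x 0)) ≤ x
  rw [show R.pow x 0 = ⊤ from rfl, R.mul_top]
  exact aux_mul_le_right R f x

end Aux

theorem stmt14 (R : ResiduatedLattice A) (p : Set A) (hp : R.PurelyPrime p)
    (e : A) (he : e ⊔ R.neg e = ⊤) :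
    Xor' (e ∈ p) (R.neg e ∈ p) := by
  obtain ⟨hF, hpure, hproper, hpp⟩ := hp
  have hmul : R.mul e (R.neg e) ≤ ⊥ := (R.adj e ⊥ (R.neg e)).mpr le_rfl
  have hmul' : R.mul (R.neg e) e ≤ ⊥ := by rw [R.mul_comm]; exact hmul
  have he' : R.neg e ⊔ e = ⊤ := by rwa [sup_comm]
  -- not both
  have hnotboth : ¬ (e ∈ p ∧ R.neg e ∈ p) := by
    rintro ⟨h1, h2⟩
    apply hproper
    apply Set.eq_univ_of_forall
    intro y
    have hb : R.mul e (R.neg e) ∈ p := hF.2.1 e h1 _ h2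
    have hbot : (⊥ : A) ∈ p := by
      have : R.mul e (R.neg e) = ⊥ := le_antisymm hmul bot_le
      rwa [this] at hb
    have := hF.2.2 ⊥ hbot y
    rwa [bot_sup_eq] at this
  -- apply purely-primeness to FGen p e and FGen p (¬e)
  have hdisj := hpp (R.FGen p e) (R.FGen p (R.neg e))
    (aux_FGen_isFilter R hF e) (aux_FGen_pure R hF hpure he hmul)
    (aux_FGen_isFilter R hF (R.neg e)) (aux_FGen_pure R hF hpure he' hmul')
    (aux_FGen_inter R hF he hmul)
  rcases hdisj with h | h
  · have he_mem : e ∈ p := h ▸ aux_mem_FGen_self R hF e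
    exact Or.inl ⟨he_mem, fun h2 => hnotboth ⟨he_mem, h2⟩⟩
  · have hne_mem : R.neg e ∈ p := h ▸ aux_mem_FGen_self R hF (R.neg e)
    exact Or.inr ⟨hne_mem, fun h1 => hnotboth ⟨h1, hne_mem⟩⟩
end

section
/- Let A be a residuated lattice, F a filter, and a, x elements of A. If the canonical quotient map π_F : A → A/F satisfies the flatness property, then F is pure; conversely if F is pure then for every filter G and element a, (G ⋎ F : a) ⊆ (G : a) ⋎ F, where (H : a) = {x ∈ A | x ∨ a ∈ H}. -/
open ResiduatedLattice

variable {A : Type*} [Lattice A] [BoundedOrder A]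

private lemma RLmul_le_mul_right (R : ResiduatedLattice A) {y z : A} (x : A) (h : y ≤ z) :
    R.mul x y ≤ R.mul x z := by
  have h1 : R.mul x z ≤ R.mul x z := le_refl _
  have h2 : z ≤ R.himp x (R.mul x z) := (R.adj x (R.mul x z) z).mp h1
  exact (R.adj x (R.mul x z) y).mpr (le_trans h h2)

private lemma RLmul_le_mul (R : ResiduatedLattice A) {x x' y y' : A} (hx : x ≤ x') (hy : y ≤ y') :
    R.mul x y ≤ R.mul x' y' := by
  calc R.mul x y ≤ R.mul x y' := RLmul_le_mul_right R x hy
    _ = R.mul y' x := R.mul_comm _ _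
    _ ≤ R.mul y' x' := RLmul_le_mul_right R y' hx
    _ = R.mul x' y' := R.mul_comm _ _

private lemma RLmul_le_left (R : ResiduatedLattice A) (x y : A) : R.mul x y ≤ x := by
  calc R.mul x y ≤ R.mul x ⊤ := RLmul_le_mul_right R x le_top
    _ = x := R.mul_top x

private lemma RLmul_le_right (R : ResiduatedLattice A) (x y : A) : R.mul x y ≤ y := by
  rw [R.mul_comm]; exact RLmul_le_left R y x

private lemma RLmul_sup (R : ResiduatedLattice A) (x y z : A) :
    R.mul x (y ⊔ z) = R.mul x y ⊔ R.mul x z := by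
  apply le_antisymm
  · have hy : y ≤ R.himp x (R.mul x y ⊔ R.mul x z) :=
      (R.adj _ _ _).mp (le_sup_left)
    have hz : z ≤ R.himp x (R.mul x y ⊔ R.mul x z) :=
      (R.adj _ _ _).mp (le_sup_right)
    exact (R.adj _ _ _).mpr (sup_le hy hz)
  · exact sup_le (RLmul_le_mul_right R x le_sup_left) (RLmul_le_mul_right R x le_sup_right)

private lemma RLmul_four (R : ResiduatedLattice A) (a b c d : A) :
    R.mul (R.mul a b) (R.mul c d) = R.mul (R.mul a c) (R.mul b d) := by
  rw [R.mul_assoc a b, ← R.mul_assoc b c d, R.mul_comm b c, R.mul_assoc c b d,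
    ← R.mul_assoc a c]

private lemma RLupward (R : ResiduatedLattice A) {F : Set A} (hF : R.IsFilter F)
    {x y : A} (hx : x ∈ F) (hxy : x ≤ y) : y ∈ F := by
  have := hF.2.2 x hx y
  rwa [sup_eq_right.mpr hxy] at this

theorem stmt19 (R : ResiduatedLattice A) (F : Set A) (hF : R.IsFilter F) :
    R.PureOn F ↔
      ∀ G : Set A, R.IsFilter G → ∀ a : A,
        R.res (R.FJoin G F) a ⊆ R.FJoin (R.res G a) F := by
  constructor
  · intro hp G hG a x hx
    obtain ⟨g, hg, f, hf, hle⟩ := hx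
    have hx' : x ∈ R.FJoin (R.perp f) F := by
      rw [hp f hf]; trivial
    obtain ⟨e, he, h, hh, hxle⟩ := hx'
    -- he : e ⊔ f = ⊤, hxle : mul e h ≤ x
    refine ⟨x ⊔ R.mul e g, ?_, R.mul f h, hF.2.1 f hf h hh, ?_⟩
    · -- (x ⊔ e⊙g) ⊔ a ∈ G
      have hgle : g ≤ (x ⊔ R.mul e g) ⊔ a := by
        calc g = R.mul g ⊤ := (R.mul_top g).symm
          _ = R.mul g (e ⊔ f) := by rw [he]
          _ = R.mul g e ⊔ R.mul g f := RLmul_sup R g e f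
          _ ≤ R.mul e g ⊔ (x ⊔ a) := by
              apply sup_le_sup (le_of_eq (R.mul_comm g e)) hle
          _ ≤ (x ⊔ R.mul e g) ⊔ a := by
              rw [sup_comm x (R.mul e g), sup_assoc]
      exact RLupward R hG hg hgle
    · -- mul (x ⊔ e⊙g) (f⊙h) ≤ x
      have key : R.mul (x ⊔ R.mul e g) (R.mul f h) =
          R.mul x (R.mul f h) ⊔ R.mul (R.mul e g) (R.mul f h) := by
        rw [R.mul_comm (x ⊔ R.mul e g), RLmul_sup, R.mul_comm _ x, R.mul_comm _ (R.mul e g)]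
      rw [key]
      apply sup_le
      · exact RLmul_le_left R x _
      · have h1 : R.mul (R.mul e g) (R.mul f h) = R.mul (R.mul e h) (R.mul g f) := by
          rw [R.mul_comm f h, RLmul_four R e g h f]
        rw [h1]
        calc R.mul (R.mul e h) (R.mul g f) ≤ R.mul x (x ⊔ a) :=
              RLmul_le_mul R hxle hle
          _ = R.mul x x ⊔ R.mul x a := RLmul_sup R x x a
          _ ≤ x := sup_le (RLmul_le_left R x x) (RLmul_le_left R x a)
  · intro h a ha
    have hT : R.IsFilter {(⊤ : A)} := by
      refine ⟨⟨⊤, rfl⟩, ?_, ?_⟩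
      · intro x hx y hy
        simp only [Set.mem_singleton_iff] at *
        rw [hx, hy, R.mul_top]
      · intro x hx y
        simp only [Set.mem_singleton_iff] at *
        rw [hx, top_sup_eq]
    apply Set.eq_univ_of_forall
    intro x
    have hmem : x ∈ R.res (R.FJoin {(⊤ : A)} F) a := by
      refine ⟨⊤, rfl, a, ha, ?_⟩
      calc R.mul ⊤ a = R.mul a ⊤ := R.mul_comm _ _
        _ = a := R.mul_top a
        _ ≤ x ⊔ a := le_sup_right
    obtain ⟨u, hu, v, hv, huv⟩ := h {(⊤ : A)} hT a hmem
    exact ⟨u, Set.mem_singleton_iff.mp hu, v, hv, huv⟩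
end
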